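/- Let K be the valuation ring of a complete non-Archimedean field F. Let b = Σ_{i≥1} b_i x^{-i} with b_i ∈ K, b_i → 0, and f = Σ_{i≥0} f_i x^i ∈ K[[x]]. Define the convolution (b*f)(x) = Σ_{i≥0} (-1)^i b_{i+1} f^{(i)}(x)/i! (convergent coefficientwise). Then (b*f)' = (b*f') = (b'*f), and (1/x)*f = f. -/

import Mathlib

/-- Formal derivative on Laurent series in `1/x`; `b n` is the coefficient of `x^{-(n+1)}`. -/
noncomputable def laurentDeriv (K : Type*) [CommRing K] (b : ℕ → K) : ℕ → K :=
  fun j => match j with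
  | 0 => 0
  | n + 1 => -((n + 1 : ℕ) : K) * b n

/-- Convolution `(b * f)(x) = ∑_{i≥0} (-1)^i b_{i+1} f^{(i)}(x)/i!` of a Laurent series
`b = ∑_{i≥1} b_i x^{-i}` (here `b n` is `b_{n+1}`) and a power series `f`; the `k`-th
coefficient of `f^{(i)}/i!` is `C(i+k, i) f_{i+k}`. -/
noncomputable def laurentConv (F : Type*) [NormedField F] (b : ℕ → F) (f : PowerSeries F) :
    PowerSeries F :=
  PowerSeries.mk fun k => ∑' i : ℕ,
    (-1) ^ i * b i * (Nat.choose (i + k) i : F) * PowerSeries.coeff (i + k) f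

/-!
All three identities hold term by term in the series defining the coefficients of the
convolution, once the series for `b' * f`, whose `i = 0` term vanishes, is reindexed by
`i ↦ i + 1`. The first two come down to the two ways of pulling a factor out of `C(i+k+1, ·)`:
`C(i+k, i) (i+k+1) = C(i+k+1, i) (k+1) = C(i+k+1, i+1) (i+1)`.
-/

open PowerSeries

theorem Nat.cast_choose_add_mul_succ_eq (R : Type*) [CommSemiring R] (i k : ℕ) :
    ((i + k).choose i : R) * (i + k + 1) = ((i + k + 1).choose i : R) * (k + 1) := by
  have h := Nat.choose_mul_succ_eq (i + k) i
  rw [show i + k + 1 - i = k + 1 by omega] at h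
  exact_mod_cast congrArg (Nat.cast (R := R)) h

theorem Nat.cast_choose_add_mul_succ_eq_succ_mul (R : Type*) [CommSemiring R] (i k : ℕ) :
    ((i + k).choose i : R) * (i + k + 1) = ((i + k + 1).choose (i + 1) : R) * (i + 1) := by
  have h := Nat.add_one_mul_choose_eq (i + k) i
  rw [mul_comm] at h
  exact_mod_cast congrArg (Nat.cast (R := R)) h

theorem tsum_eq_tsum_succ_of_eq_zero {M : Type*} [AddCommMonoid M] [TopologicalSpace M]
    {g : ℕ → M} (hg : g 0 = 0) : ∑' n, g n = ∑' n, g (n + 1) :=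
  (tsum_pnat_eq_tsum_of_eq_zero hg).symm.trans tsum_pnat_eq_tsum_succ

section

variable {F : Type*} [NormedField F]

theorem coeff_laurentConv (b : ℕ → F) (f : PowerSeries F) (k : ℕ) :
    coeff k (laurentConv F b f) =
      ∑' i : ℕ, (-1) ^ i * b i * ((i + k).choose i : F) * coeff (i + k) f :=
  coeff_mk _ _

theorem derivative_laurentConv (b : ℕ → F) (f : PowerSeries F) :
    d⁄dX F (laurentConv F b f) = laurentConv F b (d⁄dX F f) := by
  ext k
  simp only [coeff_derivative, coeff_laurentConv, ← tsum_mul_right]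
  refine tsum_congr fun i => ?_
  rw [show i + (k + 1) = i + k + 1 by omega]
  push_cast
  linear_combination (-(-1) ^ i * b i * coeff (i + k + 1) f) *
    Nat.cast_choose_add_mul_succ_eq F i k

theorem laurentConv_derivative (b : ℕ → F) (f : PowerSeries F) :
    laurentConv F b (d⁄dX F f) = laurentConv F (laurentDeriv F b) f := by
  ext k
  simp only [coeff_laurentConv, coeff_derivative]
  rw [tsum_eq_tsum_succ_of_eq_zero (g := fun i => (-1) ^ i * laurentDeriv F b i * _ * _)
    (by simp [laurentDeriv])]
  refine tsum_congr fun i => ?_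
  simp only [laurentDeriv, show i + 1 + k = i + k + 1 by omega]
  push_cast
  linear_combination ((-1) ^ i * b i * coeff (i + k + 1) f) *
    Nat.cast_choose_add_mul_succ_eq_succ_mul F i k

theorem laurentConv_X_inv (f : PowerSeries F) :
    laurentConv F (fun i => if i = 0 then (1 : F) else 0) f = f := by
  ext k
  rw [coeff_laurentConv, tsum_eq_single 0 fun i hi => by simp [hi]]
  simp

end

theorem convolution_properties_general (F : Type*) [NormedField F]
    (b : ℕ → F)
    (f : PowerSeries F) :
    PowerSeries.derivativeFun (laurentConv F b f) =
        laurentConv F b (PowerSeries.derivativeFun f) ∧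
    laurentConv F b (PowerSeries.derivativeFun f) = laurentConv F (laurentDeriv F b) f ∧
    laurentConv F (fun i => if i = 0 then (1 : F) else 0) f = f :=
  ⟨derivative_laurentConv b f, laurentConv_derivative b f, laurentConv_X_inv f⟩

/-- Properties of the convolution over the valuation ring of a complete non-Archimedean
field: `(b*f)' = b*f' = b'*f` and `(1/x)*f = f`. -/
theorem convolution_properties (F : Type*) [NormedField F] [CharZero F] [CompleteSpace F]
    (hna : ∀ x y : F, ‖x + y‖ ≤ max ‖x‖ ‖y‖)
    (b : ℕ → F) (hb : ∀ i, ‖b i‖ ≤ 1)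
    (hb0 : Filter.Tendsto b Filter.atTop (nhds 0))
    (f : PowerSeries F) (hf : ∀ k, ‖PowerSeries.coeff k f‖ ≤ 1) :
    PowerSeries.derivativeFun (laurentConv F b f) =
        laurentConv F b (PowerSeries.derivativeFun f) ∧
    laurentConv F b (PowerSeries.derivativeFun f) = laurentConv F (laurentDeriv F b) f ∧
    laurentConv F (fun i => if i = 0 then (1 : F) else 0) f = f :=
  convolution_properties_general F b f
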